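/- arXiv:2010.13847 — 4 statements merged into one kernel-verified Lean document; each statement's English description precedes it below -/
import Mathlib

section
/- The linear map H² → H⁶ given by cup product with (1/((r+2)c))·b is an isomorphism, with inverse the map B_* : H⁶ → H² defined by B_*(β) := Σᵢ (∫ β eᵢ) e^i. -/
/-!
Write `b = ∑ᵢ eᵢ e^i`. Expanding `∫ b α γ` with the Fujiki relation, the term
`(eᵢ, e^i)(α, γ)` contributes `r (α, γ)` and the two mixed terms contribute `(α, γ)` each,
so `∫ b α γ = (r + 2) c (α, γ)`. Hence `B_*((r + 2)⁻¹ c⁻¹ b α) = ∑ᵢ (α, eᵢ) e^i = α`.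
Conversely, for `β ∈ H⁶` both `(r + 2)⁻¹ c⁻¹ b B_*(β)` and `β` pair with every `γ ∈ H²` to
`∫ β γ`, so they agree by nondegeneracy of the pairing `H⁶ × H² → ℚ`.
-/

open Finset

theorem sum_smul_eq_of_mem_span {R M N ι : Type*} [CommSemiring R] [AddCommMonoid M]
    [Module R M] [AddCommMonoid N] [Module R N] [Fintype ι] [DecidableEq ι]
    (B : N →ₗ[R] M →ₗ[R] R) (e : ι → N) (f : ι → M)
    (hdual : ∀ i j, B (e i) (f j) = if i = j then 1 else 0)
    {x : M} (hx : x ∈ Submodule.span R (Set.range f)) :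
    ∑ i, B (e i) x • f i = x := by
  obtain ⟨a, rfl⟩ := (Submodule.mem_span_range_iff_exists_fun R).mp hx
  simp [hdual]

section Fujiki

variable {A : Type*} [CommRing A] [Algebra ℚ A] {H2 : Submodule ℚ A} {I : A →ₗ[ℚ] ℚ}
  {Bf : A →ₗ[ℚ] A →ₗ[ℚ] ℚ} {c : ℚ} {ι : Type*} [Fintype ι] [DecidableEq ι] {e f : ι → A}

theorem sum_apply_mul_apply_eq (hdual : ∀ i j, Bf (e i) (f j) = if i = j then 1 else 0)
    (hspanf : Submodule.span ℚ (Set.range f) = H2) {α : A} (hα : α ∈ H2) (γ : A) :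
    ∑ j, Bf (e j) α * Bf (f j) γ = Bf α γ := by
  conv_rhs => rw [← sum_smul_eq_of_mem_span Bf e f hdual (x := α) (hspanf ▸ hα)]
  simp [map_sum]

theorem map_casimir_mul_mul (hBsymm : ∀ x y : A, Bf x y = Bf y x)
    (hfuj : ∀ α β γ δ : A, α ∈ H2 → β ∈ H2 → γ ∈ H2 → δ ∈ H2 →
      I (α * β * γ * δ) = c * (Bf α β * Bf γ δ + Bf α γ * Bf β δ + Bf α δ * Bf β γ))
    (he : ∀ i, e i ∈ H2) (hf : ∀ i, f i ∈ H2)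
    (hdual : ∀ i j, Bf (e i) (f j) = if i = j then 1 else 0)
    (hspanf : Submodule.span ℚ (Set.range f) = H2) {α γ : A} (hα : α ∈ H2) (hγ : γ ∈ H2) :
    I ((∑ j, e j * f j) * α * γ) = ((Fintype.card ι : ℚ) + 2) * c * Bf α γ := by
  calc I ((∑ j, e j * f j) * α * γ)
      = ∑ j, c * (Bf (e j) (f j) * Bf α γ + Bf (e j) α * Bf (f j) γ
          + Bf (e j) γ * Bf (f j) α) := by
        rw [sum_mul, sum_mul, map_sum]
        exact sum_congr rfl fun j _ => hfuj _ _ _ _ (he j) (hf j) hα hγ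
    _ = c * (Fintype.card ι * Bf α γ + Bf α γ + Bf γ α) := by
        rw [← mul_sum, sum_add_distrib, sum_add_distrib, sum_apply_mul_apply_eq hdual hspanf hα,
          sum_apply_mul_apply_eq hdual hspanf hγ]
        simp [hdual]
    _ = ((Fintype.card ι : ℚ) + 2) * c * Bf α γ := by
        rw [hBsymm γ α]
        ring

theorem map_mul_eq_sum_mul_apply (hdual : ∀ i j, Bf (e i) (f j) = if i = j then 1 else 0)
    (hspan : Submodule.span ℚ (Set.range e) = H2) (β : A) {γ : A}
    (hγ : γ ∈ H2) : I (β * γ) = ∑ i, I (β * e i) * Bf γ (f i) := by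
  have hdual' : ∀ i j, Bf.flip (f i) (e j) = if i = j then 1 else 0 := by
    simp [hdual, eq_comm]
  conv_lhs => rw [← sum_smul_eq_of_mem_span Bf.flip f e hdual' (x := γ) (hspan ▸ hγ)]
  simp [mul_sum, mul_comm]

end Fujiki

theorem stmt2_general {A : Type*} [CommRing A] [Algebra ℚ A]
    (H2 H6 : Submodule ℚ A)
    (I : A →ₗ[ℚ] ℚ) (Bf : A →ₗ[ℚ] A →ₗ[ℚ] ℚ) (c : ℚ) (hc : c ≠ 0)
    (hBsymm : ∀ x y : A, Bf x y = Bf y x)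
    (hfuj : ∀ α β γ δ : A, α ∈ H2 → β ∈ H2 → γ ∈ H2 → δ ∈ H2 →
      I (α * β * γ * δ) =
        c * (Bf α β * Bf γ δ + Bf α γ * Bf β δ + Bf α δ * Bf β γ))
    {ι : Type*} [Fintype ι] [DecidableEq ι] (e f : ι → A)
    (he : ∀ i, e i ∈ H2) (hf : ∀ i, f i ∈ H2)
    (hdual : ∀ i j, Bf (e i) (f j) = if i = j then 1 else 0)
    (hspan : Submodule.span ℚ (Set.range e) = H2)
    (hspanf : Submodule.span ℚ (Set.range f) = H2)
    -- multiplication by `b` lands in `H⁶` and the `I`-pairing of `H⁶` against `H²`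
    -- is nondegenerate
    (hb6 : ∀ x ∈ H2, (∑ i, e i * f i) * x ∈ H6)
    (hnd6 : ∀ x ∈ H6, (∀ γ ∈ H2, I (x * γ) = 0) → x = 0) :
    (∀ β ∈ H2,
      (∑ i, I (((1 / (((Fintype.card ι : ℚ) + 2) * c)) • ((∑ j, e j * f j) * β)) * e i) • f i)
        = β) ∧
    (∀ β ∈ H6,
      (1 / (((Fintype.card ι : ℚ) + 2) * c)) • ((∑ j, e j * f j) * (∑ i, I (β * e i) • f i))
        = β) := by
  have hrc : ((Fintype.card ι : ℚ) + 2) * c ≠ 0 := mul_ne_zero (by positivity) hc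
  have hpair : ∀ α ∈ H2, ∀ γ ∈ H2,
      I ((1 / (((Fintype.card ι : ℚ) + 2) * c)) • ((∑ j, e j * f j) * α) * γ) = Bf α γ := by
    intro α hα γ hγ
    rw [smul_mul_assoc, map_smul,
      map_casimir_mul_mul hBsymm hfuj he hf hdual hspanf hα hγ, smul_eq_mul]
    field_simp
  constructor
  · intro β hβ
    simp only [hpair β hβ _ (he _), hBsymm β]
    exact sum_smul_eq_of_mem_span Bf e f hdual (x := β) (hspanf ▸ hβ)
  · intro β hβ
    set α := ∑ i, I (β * e i) • f i
    have hα : α ∈ H2 := Submodule.sum_mem _ fun i _ => Submodule.smul_mem _ _ (hf i)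
    refine sub_eq_zero.mp (hnd6 _ (H6.sub_mem (H6.smul_mem _ (hb6 α hα)) hβ) fun γ hγ => ?_)
    rw [sub_mul, map_sub, hpair α hα γ hγ, map_mul_eq_sum_mul_apply hdual hspan β hγ, sub_eq_zero]
    simp [α, map_sum, hBsymm γ]

/-- The linear map `H² → H⁶` given by cup product with `(1/((r+2)c))·b` is an
isomorphism, with inverse `B_* : H⁶ → H²`, `B_*(β) = Σᵢ (∫ β eᵢ) e^i`.
We express this by saying both composites are the identity (on `H²` and on `H⁶`). -/
theorem stmt2 {A : Type*} [CommRing A] [Algebra ℚ A]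
    (H2 H6 : Submodule ℚ A)
    (I : A →ₗ[ℚ] ℚ) (Bf : A →ₗ[ℚ] A →ₗ[ℚ] ℚ) (c : ℚ) (hc : c ≠ 0)
    (hBsymm : ∀ x y : A, Bf x y = Bf y x)
    (hInd : ∀ x : A, (∀ y : A, I (x * y) = 0) → x = 0)
    (hfuj : ∀ α β γ δ : A, α ∈ H2 → β ∈ H2 → γ ∈ H2 → δ ∈ H2 →
      I (α * β * γ * δ) =
        c * (Bf α β * Bf γ δ + Bf α γ * Bf β δ + Bf α δ * Bf β γ))
    {ι : Type*} [Fintype ι] [DecidableEq ι] (e f : ι → A)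
    (he : ∀ i, e i ∈ H2) (hf : ∀ i, f i ∈ H2)
    (hdual : ∀ i j, Bf (e i) (f j) = if i = j then 1 else 0)
    (hspan : Submodule.span ℚ (Set.range e) = H2)
    (hspanf : Submodule.span ℚ (Set.range f) = H2)
    -- multiplication by `b` lands in `H⁶` and the `I`-pairing of `H⁶` against `H²`
    -- is nondegenerate
    (hb6 : ∀ x ∈ H2, (∑ i, e i * f i) * x ∈ H6)
    (hnd6 : ∀ x ∈ H6, (∀ γ ∈ H2, I (x * γ) = 0) → x = 0) :
    (∀ β ∈ H2,
      (∑ i, I (((1 / (((Fintype.card ι : ℚ) + 2) * c)) • ((∑ j, e j * f j) * β)) * e i) • f i)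
        = β) ∧
    (∀ β ∈ H6,
      (1 / (((Fintype.card ι : ℚ) + 2) * c)) • ((∑ j, e j * f j) * (∑ i, I (β * e i) • f i))
        = β) :=
  stmt2_general H2 H6 I Bf c hc hBsymm hfuj e f he hf hdual hspan hspanf hb6 hnd6
end

section
/- In the commutative algebra H ⊗ H (with notation x₁ := x⊗1, x₂ := 1⊗x and B := Σᵢ eᵢ ⊗ e^i), for every a ∈ H² the relation (a,a)·B·b₁ = (r+2)·B·a₁² − 2·b₁·a₁·a₂ holds in the degree-8 component of H ⊗ H. -/
open scoped TensorProduct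

/-- In `H ⊗ H` (with `x₁ := x⊗1`, `x₂ := 1⊗x`, `B := Σᵢ eᵢ ⊗ e^i`), for every `a ∈ H²`:
`(a,a)·B·b₁ = (r+2)·B·a₁² − 2·b₁·a₁·a₂`. -/
theorem stmt10 {A : Type*} [CommRing A] [Algebra ℚ A] [Module.Finite ℚ A]
    (H2 H4 H6 H8 : Submodule ℚ A)
    (I : A →ₗ[ℚ] ℚ) (Bf : A →ₗ[ℚ] A →ₗ[ℚ] ℚ) (c : ℚ) (hc : c ≠ 0)
    (hBsymm : ∀ x y : A, Bf x y = Bf y x)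
    (hInd : ∀ x : A, (∀ y : A, I (x * y) = 0) → x = 0)
    (hfuj : ∀ α β γ δ : A, α ∈ H2 → β ∈ H2 → γ ∈ H2 → δ ∈ H2 →
      I (α * β * γ * δ) =
        c * (Bf α β * Bf γ δ + Bf α γ * Bf β δ + Bf α δ * Bf β γ))
    {ι : Type*} [Fintype ι] [DecidableEq ι] (e f : ι → A)
    (he : ∀ i, e i ∈ H2) (hf : ∀ i, f i ∈ H2)
    (hdual : ∀ i j, Bf (e i) (f j) = if i = j then 1 else 0)
    (hspan : Submodule.span ℚ (Set.range e) = H2)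
    (hspanf : Submodule.span ℚ (Set.range f) = H2)
    (hmul4 : ∀ x ∈ H2, ∀ y ∈ H2, x * y ∈ H4)
    (hmul6 : ∀ x ∈ H4, ∀ y ∈ H2, x * y ∈ H6)
    (hmul8 : ∀ x ∈ H6, ∀ y ∈ H2, x * y ∈ H8)
    (hnd4 : ∀ x ∈ H4, (∀ y ∈ H4, I (x * y) = 0) → x = 0)
    (hnd6 : ∀ x ∈ H6, (∀ y ∈ H2, I (x * y) = 0) → x = 0)
    (hnd8 : ∀ x ∈ H8, I x = 0 → x = 0) :
    ∀ a ∈ H2,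
      (Bf a a) • ((∑ i, e i ⊗ₜ[ℚ] f i) * ((∑ i, e i * f i) ⊗ₜ[ℚ] (1 : A)))
        = ((Fintype.card ι : ℚ) + 2) • ((∑ i, e i ⊗ₜ[ℚ] f i) * ((a * a) ⊗ₜ[ℚ] (1 : A)))
          - (2 : ℚ) • (((∑ i, e i * f i) * a) ⊗ₜ[ℚ] a) := by
  classical
  intro a ha
  set b : A := ∑ i, e i * f i with hbdef
  have hbH4 : b ∈ H4 := Submodule.sum_mem _ fun j _ => hmul4 _ (he j) _ (hf j)
  -- expansion lemma
  have hexp : ∀ y ∈ H2, (∑ j, Bf (e j) y • f j) = y := by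
    intro y hy
    rw [← hspanf] at hy
    obtain ⟨ν, hν⟩ := (Submodule.mem_span_range_iff_exists_fun ℚ).mp hy
    have hcoef : ∀ k, Bf (e k) y = ν k := by
      intro k
      rw [← hν, map_sum]
      simp [hdual]
    simp only [hcoef, hν]
  have hL2 : ∀ x ∈ H2, ∀ y : A, (∑ j, Bf (e j) x * Bf (f j) y) = Bf x y := by
    intro x hx y
    conv_rhs => rw [← hexp x hx]
    rw [map_sum]
    simp [LinearMap.sum_apply, smul_eq_mul]
  have hL3 : ∀ a' ∈ H2, ∀ y ∈ H2,
      I (b * a' * y) = c * ((Fintype.card ι : ℚ) + 2) * Bf a' y := by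
    intro a' ha' y hy
    have hsplit : b * a' * y = ∑ j, e j * f j * a' * y := by
      rw [hbdef, Finset.sum_mul, Finset.sum_mul]
    rw [hsplit, map_sum]
    have heach : ∀ j, I (e j * f j * a' * y)
        = c * (Bf (e j) (f j) * Bf a' y + Bf (e j) a' * Bf (f j) y
            + Bf (e j) y * Bf (f j) a') :=
      fun j => hfuj (e j) (f j) a' y (he j) (hf j) ha' hy
    simp only [heach]
    rw [← Finset.mul_sum, Finset.sum_add_distrib, Finset.sum_add_distrib,
      ← Finset.sum_mul]
    have h1 : (∑ j, Bf (e j) (f j)) = (Fintype.card ι : ℚ) := by simp [hdual]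
    have h2 : (∑ j, Bf (e j) a' * Bf (f j) y) = Bf a' y := hL2 a' ha' y
    have h3 : (∑ j, Bf (e j) y * Bf (f j) a') = Bf a' y := by
      rw [hL2 y hy a', hBsymm]
    rw [h1, h2, h3]; ring
  -- key component identity
  have hL4 : ∀ i, Bf a a • (e i * b)
      = ((Fintype.card ι : ℚ) + 2) • (e i * (a * a)) - (2 * Bf (e i) a) • (b * a) := by
    intro i
    have hz6 : Bf a a • (e i * b)
        - (((Fintype.card ι : ℚ) + 2) • (e i * (a * a)) - (2 * Bf (e i) a) • (b * a)) ∈ H6 := by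
      have h1 : e i * b ∈ H6 := by
        rw [mul_comm]; exact hmul6 _ hbH4 _ (he i)
      have h2 : e i * (a * a) ∈ H6 := by
        rw [mul_comm]; exact hmul6 _ (hmul4 _ ha _ ha) _ (he i)
      have h3 : b * a ∈ H6 := hmul6 _ hbH4 _ ha
      exact Submodule.sub_mem _ (Submodule.smul_mem _ _ h1)
        (Submodule.sub_mem _ (Submodule.smul_mem _ _ h2) (Submodule.smul_mem _ _ h3))
    have hzero := hnd6 _ hz6 ?_
    · exact sub_eq_zero.mp hzero
    · intro y hy
      have e1 : I ((e i * b) * y) = c * ((Fintype.card ι : ℚ) + 2) * Bf (e i) y := by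
        have : (e i * b) * y = b * e i * y := by ring
        rw [this, hL3 (e i) (he i) y hy]
      have e2 : I ((e i * (a * a)) * y)
          = c * (Bf (e i) a * Bf a y + Bf (e i) a * Bf a y + Bf (e i) y * Bf a a) := by
        have : (e i * (a * a)) * y = e i * a * a * y := by ring
        rw [this, hfuj (e i) a a y (he i) ha ha hy]
      have e3 : I ((b * a) * y) = c * ((Fintype.card ι : ℚ) + 2) * Bf a y :=
        hL3 a ha y hy
      rw [sub_mul, sub_mul, smul_mul_assoc, smul_mul_assoc, smul_mul_assoc,
        map_sub, map_sub, map_smul, map_smul, map_smul, e1, e2, e3]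
      simp only [smul_eq_mul]
      ring
  -- assemble the tensor identity
  have hLHS : (∑ i, e i ⊗ₜ[ℚ] f i) * (b ⊗ₜ[ℚ] (1 : A)) = ∑ i, (e i * b) ⊗ₜ[ℚ] f i := by
    rw [Finset.sum_mul]
    simp [Algebra.TensorProduct.tmul_mul_tmul]
  have hMID : (∑ i, e i ⊗ₜ[ℚ] f i) * ((a * a) ⊗ₜ[ℚ] (1 : A))
      = ∑ i, (e i * (a * a)) ⊗ₜ[ℚ] f i := by
    rw [Finset.sum_mul]
    simp [Algebra.TensorProduct.tmul_mul_tmul]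
  have hRHS : (b * a) ⊗ₜ[ℚ] a = ∑ i, Bf (e i) a • ((b * a) ⊗ₜ[ℚ] f i) := by
    have key : a = ∑ j, Bf (e j) a • f j := (hexp a ha).symm
    set w := b * a with hw
    conv_lhs => rw [key]
    rw [TensorProduct.tmul_sum]
    exact Finset.sum_congr rfl fun i _ => by rw [TensorProduct.tmul_smul]
  rw [hLHS, hMID, hRHS, Finset.smul_sum, Finset.smul_sum, Finset.smul_sum,
    ← Finset.sum_sub_distrib]
  refine Finset.sum_congr rfl fun i _ => ?_
  rw [TensorProduct.smul_tmul', TensorProduct.smul_tmul', smul_smul,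
    TensorProduct.smul_tmul', ← TensorProduct.sub_tmul, hL4 i]
end

section
/- In H ⊗ H, for every a ∈ H² the relation r·B·b₁·a₁ = b₁²·a₂ holds (degree-10 component), where B = Σᵢ eᵢ⊗e^i, b₁ = b⊗1, a₁ = a⊗1, a₂ = 1⊗a. -/
open scoped TensorProduct

/-- In `H ⊗ H`, for every `a ∈ H²` the relation `r·B·b₁·a₁ = b₁²·a₂` holds, where
`B = Σᵢ eᵢ⊗e^i`, `b₁ = b⊗1`, `a₁ = a⊗1`, `a₂ = 1⊗a`. -/
theorem stmt11 {A : Type*} [CommRing A] [Algebra ℚ A] [Module.Finite ℚ A]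
    (H2 H4 H6 H8 : Submodule ℚ A)
    (I : A →ₗ[ℚ] ℚ) (Bf : A →ₗ[ℚ] A →ₗ[ℚ] ℚ) (c : ℚ) (hc : c ≠ 0)
    (hBsymm : ∀ x y : A, Bf x y = Bf y x)
    (hInd : ∀ x : A, (∀ y : A, I (x * y) = 0) → x = 0)
    (hfuj : ∀ α β γ δ : A, α ∈ H2 → β ∈ H2 → γ ∈ H2 → δ ∈ H2 →
      I (α * β * γ * δ) =
        c * (Bf α β * Bf γ δ + Bf α γ * Bf β δ + Bf α δ * Bf β γ))
    {ι : Type*} [Fintype ι] [DecidableEq ι] (e f : ι → A)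
    (he : ∀ i, e i ∈ H2) (hf : ∀ i, f i ∈ H2)
    (hdual : ∀ i j, Bf (e i) (f j) = if i = j then 1 else 0)
    (hspan : Submodule.span ℚ (Set.range e) = H2)
    (hspanf : Submodule.span ℚ (Set.range f) = H2)
    (hmul4 : ∀ x ∈ H2, ∀ y ∈ H2, x * y ∈ H4)
    (hmul6 : ∀ x ∈ H4, ∀ y ∈ H2, x * y ∈ H6)
    (hmul8 : ∀ x ∈ H6, ∀ y ∈ H2, x * y ∈ H8)
    (hnd4 : ∀ x ∈ H4, (∀ y ∈ H4, I (x * y) = 0) → x = 0)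
    (hnd6 : ∀ x ∈ H6, (∀ y ∈ H2, I (x * y) = 0) → x = 0)
    (hnd8 : ∀ x ∈ H8, I x = 0 → x = 0) :
    ∀ a ∈ H2,
      (Fintype.card ι : ℚ) •
          ((∑ i, e i ⊗ₜ[ℚ] f i) * (((∑ i, e i * f i) * a) ⊗ₜ[ℚ] (1 : A)))
        = ((∑ i, e i * f i) * (∑ i, e i * f i)) ⊗ₜ[ℚ] a := by
  intro a ha
  set r : ℚ := (Fintype.card ι : ℚ) with hr
  set b : A := ∑ i, e i * f i with hb
  -- expansion in the f-basis
  have hexp : ∀ y ∈ H2, y = ∑ j, Bf (e j) y • f j := by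
    intro y hy
    rw [← hspanf] at hy
    induction hy using Submodule.span_induction with
    | mem y hy =>
      obtain ⟨i, rfl⟩ := hy
      simp [hdual]
    | zero => simp
    | add u v hu hv ihu ihv =>
      simp only [map_add, add_smul, Finset.sum_add_distrib]
      rw [← ihu, ← ihv]
    | smul t u hu ihu =>
      simp only [map_smul, smul_eq_mul, mul_smul]
      rw [← Finset.smul_sum, ← ihu]
  -- expansion in the e-basis
  have hexp' : ∀ x ∈ H2, x = ∑ j, Bf x (f j) • e j := by
    intro x hx
    rw [← hspan] at hx
    induction hx using Submodule.span_induction with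
    | mem x hx =>
      obtain ⟨i, rfl⟩ := hx
      simp [hdual]
    | zero => simp
    | add u v hu hv ihu ihv =>
      simp only [map_add, LinearMap.add_apply, add_smul, Finset.sum_add_distrib]
      rw [← ihu, ← ihv]
    | smul t u hu ihu =>
      simp only [map_smul, LinearMap.smul_apply, smul_eq_mul, mul_smul]
      rw [← Finset.smul_sum, ← ihu]
  -- memberships
  have hxba : ∀ x ∈ H2, x * b * a ∈ H8 := by
    intro x hx
    have : x * b * a = ∑ i, ((x * e i) * f i) * a := by
      rw [hb, Finset.mul_sum, Finset.sum_mul]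
      exact Finset.sum_congr rfl fun i _ => by ring
    rw [this]
    exact Submodule.sum_mem _ fun i _ =>
      hmul8 _ (hmul6 _ (hmul4 _ hx _ (he i)) _ (hf i)) _ ha
  have hb2 : b * b ∈ H8 := by
    have : b * b = ∑ i, ∑ j, ((e i * f i) * e j) * f j := by
      rw [hb, Finset.sum_mul]
      exact Finset.sum_congr rfl fun i _ => by
        rw [Finset.mul_sum]; exact Finset.sum_congr rfl fun j _ => by ring
    rw [this]
    exact Submodule.sum_mem _ fun i _ => Submodule.sum_mem _ fun j _ =>
      hmul8 _ (hmul6 _ (hmul4 _ (he i) _ (hf i)) _ (he j)) _ (hf j)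
  -- sum identities
  have hS1 : ∀ x ∈ H2, ∑ i, Bf x (e i) * Bf (f i) a = Bf x a := by
    intro x hx
    conv_rhs => rw [hexp x hx]
    simp only [map_sum, map_smul, LinearMap.sum_apply, LinearMap.smul_apply,
      smul_eq_mul]
    exact Finset.sum_congr rfl fun i _ => by rw [hBsymm x (e i)]
  have hS2 : ∀ x ∈ H2, ∑ i, Bf x (f i) * Bf (e i) a = Bf x a := by
    intro x hx
    conv_rhs => rw [hexp' x hx]
    simp only [map_sum, map_smul, LinearMap.sum_apply, LinearMap.smul_apply,
      smul_eq_mul]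
  have hS3 : ∑ i : ι, Bf (e i) (f i) = r := by
    simp [hdual, hr]
  -- integral of x*b*a
  have hIxba : ∀ x ∈ H2, I (x * b * a) = c * (r + 2) * Bf x a := by
    intro x hx
    have h1 : x * b * a = ∑ i, x * e i * f i * a := by
      rw [hb, Finset.mul_sum, Finset.sum_mul]
      exact Finset.sum_congr rfl fun i _ => by ring
    rw [h1, map_sum]
    have h2 : ∀ i : ι, I (x * e i * f i * a) =
        c * (Bf x (e i) * Bf (f i) a + Bf x (f i) * Bf (e i) a +
          Bf x a * Bf (e i) (f i)) := fun i => hfuj x (e i) (f i) a hx (he i) (hf i) ha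
    simp only [h2, mul_add, Finset.sum_add_distrib]
    have pull : ∀ g : ι → ℚ, ∑ i, c * g i = c * ∑ i, g i := fun g =>
      (Finset.mul_sum _ _ _).symm
    rw [pull, pull, pull, hS1 x hx, hS2 x hx, ← Finset.mul_sum, hS3]
    ring
  -- integral of b²
  have hIb2 : I (b * b) = c * (r * r + 2 * r) := by
    have h1 : b * b = ∑ i, ∑ j, e i * f i * e j * f j := by
      rw [hb, Finset.sum_mul]
      exact Finset.sum_congr rfl fun i _ => by
        rw [Finset.mul_sum]; exact Finset.sum_congr rfl fun j _ => by ring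
    rw [h1, map_sum]
    have h2 : ∀ i j : ι, I (e i * f i * e j * f j) =
        c * (Bf (e i) (f i) * Bf (e j) (f j) + Bf (e i) (e j) * Bf (f i) (f j) +
          Bf (e i) (f j) * Bf (f i) (e j)) :=
      fun i j => hfuj _ _ _ _ (he i) (hf i) (he j) (hf j)
    simp only [map_sum, h2]
    have hA : ∑ i : ι, ∑ j : ι, Bf (e i) (f i) * Bf (e j) (f j) = r * r := by
      rw [← Finset.sum_mul_sum, hS3]
    have hB : ∑ i : ι, ∑ j : ι, Bf (e i) (e j) * Bf (f i) (f j) = r := by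
      have key : ∀ i : ι, ∑ j, Bf (e i) (e j) * Bf (f i) (f j) = 1 := by
        intro i
        have := hexp (e i) (he i)
        calc ∑ j, Bf (e i) (e j) * Bf (f i) (f j)
            = Bf (f i) (∑ j, Bf (e j) (e i) • f j) := by
              simp only [map_sum, map_smul, smul_eq_mul]
              exact Finset.sum_congr rfl fun j _ => by
                rw [hBsymm (e i) (e j), hBsymm (f i) (f j), mul_comm]
          _ = Bf (f i) (e i) := by rw [← this]
          _ = 1 := by rw [hBsymm, hdual]; simp
      simp only [key, Finset.sum_const, Finset.card_univ, nsmul_eq_mul, mul_one, hr]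
    have hC : ∑ i : ι, ∑ j : ι, Bf (e i) (f j) * Bf (f i) (e j) = r := by
      have key : ∀ i : ι, ∑ j, Bf (e i) (f j) * Bf (f i) (e j) = 1 := by
        intro i
        have : ∀ j, Bf (e i) (f j) * Bf (f i) (e j) =
            if i = j then Bf (f i) (e j) else 0 := by
          intro j; rw [hdual]; split <;> simp
        simp only [this]
        rw [Finset.sum_ite_eq, if_pos (Finset.mem_univ i), hBsymm, hdual]
        simp
      simp only [key, Finset.sum_const, Finset.card_univ, nsmul_eq_mul, mul_one, hr]
    simp only [h2, mul_add, Finset.sum_add_distrib]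
    have pull : ∀ g : ι → ι → ℚ, ∑ i, ∑ j, c * g i j = c * ∑ i, ∑ j, g i j := by
      intro g; simp [Finset.mul_sum]
    rw [pull, pull, pull, hA, hB, hC]
    ring
  -- the core identity in H8
  have hcore : ∀ x ∈ H2, r • (x * b * a) = Bf x a • (b * b) := by
    intro x hx
    have hz : r • (x * b * a) - Bf x a • (b * b) ∈ H8 :=
      Submodule.sub_mem _ (Submodule.smul_mem _ _ (hxba x hx))
        (Submodule.smul_mem _ _ hb2)
    have hI : I (r • (x * b * a) - Bf x a • (b * b)) = 0 := by
      rw [map_sub, map_smul, map_smul, hIxba x hx, hIb2, smul_eq_mul, smul_eq_mul]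
      ring
    exact sub_eq_zero.mp (hnd8 _ hz hI)
  -- final tensor computation
  calc r • ((∑ i, e i ⊗ₜ[ℚ] f i) * ((b * a) ⊗ₜ[ℚ] (1 : A)))
      = ∑ i, (r • (e i * b * a)) ⊗ₜ[ℚ] f i := by
        rw [Finset.sum_mul, Finset.smul_sum]
        exact Finset.sum_congr rfl fun i _ => by
          rw [Algebra.TensorProduct.tmul_mul_tmul, mul_one, ← mul_assoc,
            ← TensorProduct.smul_tmul']
    _ = ∑ i, (b * b) ⊗ₜ[ℚ] (Bf (e i) a • f i) := by
        refine Finset.sum_congr rfl fun i _ => ?_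
        rw [hcore (e i) (he i), TensorProduct.smul_tmul]
    _ = (b * b) ⊗ₜ[ℚ] a := by
        rw [← TensorProduct.tmul_sum, ← hexp a ha]
end

section
/- In H ⊗ H, for every a ∈ H² the relation (r+2)·B²·a₁ = 2·B·b₁·a₂ + b₁·b₂·a₁ holds, where B = Σᵢ eᵢ⊗e^i, b₁ = b⊗1, b₂ = 1⊗b, a₁ = a⊗1, a₂ = 1⊗a. -/
open scoped TensorProduct

section Aux

variable {A : Type*} [CommRing A] [Algebra ℚ A]

/-- `x ⊗ y ↦ I(δ*x) • y`. -/
noncomputable def phiMap (I : A →ₗ[ℚ] ℚ) (δ : A) : A ⊗[ℚ] A →ₗ[ℚ] A :=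
  (TensorProduct.lid ℚ A).toLinearMap ∘ₗ
    LinearMap.rTensor A (I ∘ₗ LinearMap.mulLeft ℚ δ)

@[simp] lemma phiMap_tmul (I : A →ₗ[ℚ] ℚ) (δ x y : A) :
    phiMap I δ (x ⊗ₜ[ℚ] y) = I (δ * x) • y := by
  simp [phiMap]

/-- `x ⊗ y ↦ φ(y) • x`. -/
noncomputable def coordMap (φ : A →ₗ[ℚ] ℚ) : A ⊗[ℚ] A →ₗ[ℚ] A :=
  (TensorProduct.rid ℚ A).toLinearMap ∘ₗ LinearMap.lTensor A φ

@[simp] lemma coordMap_tmul (φ : A →ₗ[ℚ] ℚ) (x y : A) :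
    coordMap φ (x ⊗ₜ[ℚ] y) = φ y • x := by
  simp [coordMap]

lemma aux_reduce [Module.Finite ℚ A]
    (H2 H6 : Submodule ℚ A) (I : A →ₗ[ℚ] ℚ)
    (hnd6 : ∀ x ∈ H6, (∀ y ∈ H2, I (x * y) = 0) → x = 0)
    (t : A ⊗[ℚ] A)
    (ht : t ∈ Submodule.span ℚ {z : A ⊗[ℚ] A | ∃ x ∈ H6, ∃ y : A, z = x ⊗ₜ[ℚ] y})
    (hpair : ∀ δ ∈ H2, phiMap I δ t = 0) : t = 0 := by
  classical
  set bas := Module.finBasis ℚ A with hbas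
  have hrepr : ∀ s : A ⊗[ℚ] A, s = ∑ k, (coordMap (bas.coord k)) s ⊗ₜ[ℚ] bas k := by
    intro s
    induction s using TensorProduct.induction_on with
    | zero => simp
    | tmul x y =>
        simp only [coordMap_tmul]
        rw [Finset.sum_congr rfl fun k _ => TensorProduct.smul_tmul _ _ _,
          ← TensorProduct.tmul_sum]
        congr 1
        exact (bas.sum_repr y).symm
    | add u v hu hv =>
        simp only [map_add]
        rw [Finset.sum_congr rfl fun k _ => TensorProduct.add_tmul _ _ _,
          Finset.sum_add_distrib, ← hu, ← hv]
  have hcomm : ∀ (δ : A) (k) (s : A ⊗[ℚ] A),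
      I (δ * coordMap (bas.coord k) s) = bas.coord k (phiMap I δ s) := by
    intro δ k s
    induction s using TensorProduct.induction_on with
    | zero => simp
    | tmul x y => simp [mul_smul_comm, mul_comm]
    | add u v hu hv => simp [mul_add, hu, hv]
  have hk : ∀ k, coordMap (bas.coord k) t = 0 := by
    intro k
    refine hnd6 _ ?_ ?_
    · refine Submodule.span_induction (fun z hz => ?_) (by simp) (fun u v _ _ hu hv => ?_)
        (fun r u _ hu => ?_) ht
      · obtain ⟨x, hx, y, rfl⟩ := hz
        simpa using H6.smul_mem _ hx
      · rw [map_add]; exact H6.add_mem hu hv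
      · rw [map_smul]; exact H6.smul_mem r hu
    · intro y hy
      rw [mul_comm, hcomm, hpair y hy, map_zero]
  rw [hrepr t]
  simp [hk]

end Aux

/-- In `H ⊗ H`, for every `a ∈ H²` the relation `(r+2)·B²·a₁ = 2·B·b₁·a₂ + b₁·b₂·a₁`
holds, where `B = Σᵢ eᵢ⊗e^i`, `b₁ = b⊗1`, `b₂ = 1⊗b`, `a₁ = a⊗1`, `a₂ = 1⊗a`. -/
theorem stmt12 {A : Type*} [CommRing A] [Algebra ℚ A] [Module.Finite ℚ A]
    (H2 H4 H6 H8 : Submodule ℚ A)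
    (I : A →ₗ[ℚ] ℚ) (Bf : A →ₗ[ℚ] A →ₗ[ℚ] ℚ) (c : ℚ) (hc : c ≠ 0)
    (hBsymm : ∀ x y : A, Bf x y = Bf y x)
    (hInd : ∀ x : A, (∀ y : A, I (x * y) = 0) → x = 0)
    (hfuj : ∀ α β γ δ : A, α ∈ H2 → β ∈ H2 → γ ∈ H2 → δ ∈ H2 →
      I (α * β * γ * δ) =
        c * (Bf α β * Bf γ δ + Bf α γ * Bf β δ + Bf α δ * Bf β γ))
    {ι : Type*} [Fintype ι] [DecidableEq ι] (e f : ι → A)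
    (he : ∀ i, e i ∈ H2) (hf : ∀ i, f i ∈ H2)
    (hdual : ∀ i j, Bf (e i) (f j) = if i = j then 1 else 0)
    (hspan : Submodule.span ℚ (Set.range e) = H2)
    (hspanf : Submodule.span ℚ (Set.range f) = H2)
    (hmul4 : ∀ x ∈ H2, ∀ y ∈ H2, x * y ∈ H4)
    (hmul6 : ∀ x ∈ H4, ∀ y ∈ H2, x * y ∈ H6)
    (hmul8 : ∀ x ∈ H6, ∀ y ∈ H2, x * y ∈ H8)
    (hnd4 : ∀ x ∈ H4, (∀ y ∈ H4, I (x * y) = 0) → x = 0)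
    (hnd6 : ∀ x ∈ H6, (∀ y ∈ H2, I (x * y) = 0) → x = 0)
    (hnd8 : ∀ x ∈ H8, I x = 0 → x = 0) :
    ∀ a ∈ H2,
      ((Fintype.card ι : ℚ) + 2) •
          ((∑ i, e i ⊗ₜ[ℚ] f i) * (∑ i, e i ⊗ₜ[ℚ] f i) * (a ⊗ₜ[ℚ] (1 : A)))
        = (2 : ℚ) • ((∑ i, e i ⊗ₜ[ℚ] f i) * ((∑ i, e i * f i) ⊗ₜ[ℚ] a))
          + ((∑ i, e i * f i) * a) ⊗ₜ[ℚ] (∑ i, e i * f i) := by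
  classical
  intro a ha
  set r : ℚ := (Fintype.card ι : ℚ) with hr
  set b : A := ∑ i, e i * f i with hbdef
  -- contraction lemmas
  have L1 : ∀ x ∈ H2, ∑ i, Bf x (f i) • e i = x := by
    intro x hx
    rw [← hspan] at hx
    induction hx using Submodule.span_induction with
    | mem z hz =>
        obtain ⟨j, rfl⟩ := hz
        simp [hdual, ite_smul]
    | zero => simp
    | add u v hu hv h1 h2 =>
        simp only [map_add, LinearMap.add_apply, add_smul, Finset.sum_add_distrib, h1, h2]
    | smul q u hu h1 =>
        simp only [map_smul, LinearMap.smul_apply, smul_eq_mul, mul_smul]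
        rw [← Finset.smul_sum, h1]
  have L2 : ∀ x ∈ H2, ∑ i, Bf x (e i) • f i = x := by
    intro x hx
    rw [← hspanf] at hx
    induction hx using Submodule.span_induction with
    | mem z hz =>
        obtain ⟨j, rfl⟩ := hz
        have : ∀ i, Bf (f j) (e i) = if i = j then 1 else 0 := fun i => by
          rw [hBsymm, hdual]
        simp [this, ite_smul]
    | zero => simp
    | add u v hu hv h1 h2 =>
        simp only [map_add, LinearMap.add_apply, add_smul, Finset.sum_add_distrib, h1, h2]
    | smul q u hu h1 =>
        simp only [map_smul, LinearMap.smul_apply, smul_eq_mul, mul_smul]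
        rw [← Finset.smul_sum, h1]
  -- scalar contraction identities
  have c1 : ∀ x ∈ H2, ∀ z : A, ∑ j, Bf x (f j) * Bf z (e j) = Bf z x := by
    intro x hx z
    have := congrArg (Bf z) (L1 x hx)
    simpa [map_sum, map_smul, smul_eq_mul] using this
  have c2 : ∀ x ∈ H2, ∀ z : A, ∑ j, Bf x (e j) * Bf z (f j) = Bf z x := by
    intro x hx z
    have := congrArg (Bf z) (L2 x hx)
    simpa [map_sum, map_smul, smul_eq_mul] using this
  have htr : ∑ j, Bf (e j) (f j) = r := by
    simp [hdual, hr]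
  -- membership of b in H4
  have hb4 : b ∈ H4 := Submodule.sum_mem _ fun i _ => hmul4 _ (he i) _ (hf i)
  -- expansions
  have hexp1 : (∑ i, e i ⊗ₜ[ℚ] f i) * (∑ i, e i ⊗ₜ[ℚ] f i) * (a ⊗ₜ[ℚ] (1 : A))
      = ∑ i, ∑ j, (e i * e j * a) ⊗ₜ[ℚ] (f i * f j) := by
    rw [Finset.sum_mul_sum, Finset.sum_mul]
    refine Finset.sum_congr rfl fun i _ => ?_
    rw [Finset.sum_mul]
    refine Finset.sum_congr rfl fun j _ => ?_
    rw [Algebra.TensorProduct.tmul_mul_tmul, Algebra.TensorProduct.tmul_mul_tmul, mul_one]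
  have hexp2 : (∑ i, e i ⊗ₜ[ℚ] f i) * (b ⊗ₜ[ℚ] a)
      = ∑ i, (e i * b) ⊗ₜ[ℚ] (f i * a) := by
    rw [Finset.sum_mul]
    exact Finset.sum_congr rfl fun i _ => Algebra.TensorProduct.tmul_mul_tmul _ _ _ _
  rw [hexp1, hexp2]
  -- the two sides as tensors
  set T1 : A ⊗[ℚ] A := (r + 2) • ∑ i, ∑ j, (e i * e j * a) ⊗ₜ[ℚ] (f i * f j) with hT1
  set T2 : A ⊗[ℚ] A :=
    (2 : ℚ) • (∑ i, (e i * b) ⊗ₜ[ℚ] (f i * a)) + (b * a) ⊗ₜ[ℚ] b with hT2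
  show T1 = T2
  have hmem : T1 - T2 ∈
      Submodule.span ℚ {z : A ⊗[ℚ] A | ∃ x ∈ H6, ∃ y : A, z = x ⊗ₜ[ℚ] y} := by
    refine Submodule.sub_mem _ ?_ ?_
    · refine Submodule.smul_mem _ _ (Submodule.sum_mem _ fun i _ =>
        Submodule.sum_mem _ fun j _ => Submodule.subset_span ?_)
      exact ⟨e i * e j * a, hmul6 _ (hmul4 _ (he i) _ (he j)) _ ha, _, rfl⟩
    · refine Submodule.add_mem _ ?_ ?_
      · refine Submodule.smul_mem _ _ (Submodule.sum_mem _ fun i _ =>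
          Submodule.subset_span ?_)
        exact ⟨e i * b, by rw [mul_comm]; exact hmul6 _ hb4 _ (he i), _, rfl⟩
      · exact Submodule.subset_span ⟨b * a, hmul6 _ hb4 _ ha, _, rfl⟩
  have hpair : ∀ δ ∈ H2, phiMap I δ (T1 - T2) = 0 := by
    intro δ hδ
    rw [map_sub, sub_eq_zero]
    have hI1 : ∀ i j, I (δ * (e i * e j * a))
        = c * (Bf δ (e i) * Bf (e j) a + Bf δ (e j) * Bf (e i) a
            + Bf δ a * Bf (e i) (e j)) := by
      intro i j
      rw [show δ * (e i * e j * a) = δ * e i * e j * a from by ring]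
      exact hfuj _ _ _ _ hδ (he i) (he j) ha
    have hI2 : ∀ i, I (δ * (e i * b)) = c * ((r + 2) * Bf δ (e i)) := by
      intro i
      rw [hbdef, Finset.mul_sum, Finset.mul_sum, map_sum]
      have step : ∀ j, I (δ * (e i * (e j * f j)))
          = c * (Bf δ (e i) * Bf (e j) (f j) + Bf δ (e j) * Bf (e i) (f j)
              + Bf δ (f j) * Bf (e i) (e j)) := by
        intro j
        rw [show δ * (e i * (e j * f j)) = δ * e i * e j * f j from by ring]
        exact hfuj _ _ _ _ hδ (he i) (he j) (hf j)
      rw [Finset.sum_congr rfl fun j _ => step j, ← Finset.mul_sum,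
        Finset.sum_add_distrib, Finset.sum_add_distrib, ← Finset.mul_sum, htr]
      have e1 : ∑ j, Bf δ (e j) * Bf (e i) (f j) = Bf δ (e i) := by
        simp [hdual, mul_ite, Finset.sum_ite_eq]
      have e2 : ∑ j, Bf δ (f j) * Bf (e i) (e j) = Bf δ (e i) := by
        rw [c1 δ hδ (e i), hBsymm]
      rw [e1, e2]; ring
    have hI3 : I (δ * (b * a)) = c * ((r + 2) * Bf δ a) := by
      rw [hbdef, Finset.sum_mul, Finset.mul_sum, map_sum]
      have step : ∀ j, I (δ * (e j * f j * a))
          = c * (Bf δ (e j) * Bf (f j) a + Bf δ (f j) * Bf (e j) a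
              + Bf δ a * Bf (e j) (f j)) := by
        intro j
        rw [show δ * (e j * f j * a) = δ * e j * f j * a from by ring]
        exact hfuj _ _ _ _ hδ (he j) (hf j) ha
      rw [Finset.sum_congr rfl fun j _ => step j, ← Finset.mul_sum,
        Finset.sum_add_distrib, Finset.sum_add_distrib, ← Finset.mul_sum, htr]
      have e1 : ∑ j, Bf δ (e j) * Bf (f j) a = Bf δ a := by
        rw [Finset.sum_congr rfl fun j _ => by rw [hBsymm (f j) a], c2 δ hδ a, hBsymm]
      have e2 : ∑ j, Bf δ (f j) * Bf (e j) a = Bf δ a := by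
        rw [Finset.sum_congr rfl fun j _ => by rw [hBsymm (e j) a], c1 δ hδ a, hBsymm]
      rw [e1, e2]; ring
    -- apply phiMap
    rw [hT1, hT2]
    simp only [map_smul, map_sum, map_add, phiMap_tmul]
    simp only [hI1, hI2, hI3]
    -- sub-sums
    have S1 : ∑ i, ∑ j, (Bf δ (e i) * Bf (e j) a) • (f i * f j) = δ * a := by
      rw [Finset.sum_congr rfl fun i _ => Finset.sum_congr rfl fun j _ =>
        (smul_mul_smul_comm (Bf δ (e i)) (f i) (Bf (e j) a) (f j)).symm,
        ← Finset.sum_mul_sum, L2 δ hδ,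
        Finset.sum_congr rfl fun j _ => by rw [hBsymm (e j) a], L2 a ha]
    have S2 : ∑ i, ∑ j, (Bf δ (e j) * Bf (e i) a) • (f i * f j) = δ * a := by
      rw [Finset.sum_congr rfl fun i _ => Finset.sum_congr rfl fun j _ => by
        rw [mul_comm (Bf δ (e j)) (Bf (e i) a),
          ← smul_mul_smul_comm (Bf (e i) a) (f i) (Bf δ (e j)) (f j)],
        ← Finset.sum_mul_sum, L2 δ hδ,
        Finset.sum_congr rfl fun i _ => by rw [hBsymm (e i) a], L2 a ha, mul_comm]
    have S3 : ∑ i, ∑ j, (Bf δ a * Bf (e i) (e j)) • (f i * f j) = Bf δ a • b := by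
      rw [Finset.sum_congr rfl fun i _ => Finset.sum_congr rfl fun j _ => mul_smul _ _ _,
        Finset.sum_congr rfl fun i _ => (Finset.smul_sum).symm, ← Finset.smul_sum]
      congr 1
      rw [Finset.sum_congr rfl fun i _ => Finset.sum_congr rfl fun j _ =>
        (mul_smul_comm (Bf (e i) (e j)) (f i) (f j)).symm,
        Finset.sum_congr rfl fun i _ => (Finset.mul_sum _ _ _).symm,
        Finset.sum_congr rfl fun i _ => by rw [L2 (e i) (he i), mul_comm]]
    have S4 : ∑ i, Bf δ (e i) • (f i * a) = δ * a := by
      rw [Finset.sum_congr rfl fun i _ => (smul_mul_assoc _ _ _).symm,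
        ← Finset.sum_mul, L2 δ hδ]
    calc (r + 2) • ∑ i, ∑ j,
          (c * (Bf δ (e i) * Bf (e j) a + Bf δ (e j) * Bf (e i) a
            + Bf δ a * Bf (e i) (e j))) • (f i * f j)
        = (r + 2) • (c • (δ * a) + c • (δ * a) + c • (Bf δ a • b)) := by
          have comb : ∀ u v w : ι → ι → ℚ,
              ∑ i, ∑ j, (c * (u i j + v i j + w i j)) • (f i * f j)
              = c • (∑ i, ∑ j, u i j • (f i * f j))
                + c • (∑ i, ∑ j, v i j • (f i * f j))
                + c • (∑ i, ∑ j, w i j • (f i * f j)) := by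
            intro u v w
            simp only [mul_smul, add_smul, Finset.sum_add_distrib, Finset.smul_sum,
              smul_add]
          rw [comb, S1, S2, S3]
      _ = (2 : ℚ) • ∑ i, (c * ((r + 2) * Bf δ (e i))) • (f i * a)
          + (c * ((r + 2) * Bf δ a)) • b := by
          simp only [mul_smul]
          rw [← Finset.smul_sum, ← Finset.smul_sum, S4]
          match_scalars <;> ring
  have := aux_reduce H2 H6 I hnd6 (T1 - T2) hmem hpair
  exact sub_eq_zero.mp this
end
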